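/- arXiv:1810.02206 — 4 statements merged into one kernel-verified Lean document; each statement's English description precedes it below -/
import Mathlib

section
/- If the roots z1, z2, z3 of the cubic polynomial z³ + g₂z + g₃ are distinct, then j(z1,z2,z3,∞) = -4g₂³/Δ, where Δ = -4g₂³ - 27g₃² is the discriminant. -/
/-!
By Vieta, `z1 + z2 + z3 = 0`, `g₂ = z1 z2 + z1 z3 + z2 z3` and `g₃ = -z1 z2 z3`, and because the roots
sum to zero the discriminant is `((z1 - z2)(z1 - z3)(z2 - z3))²`. The j-invariant of `λ = x / y` is
homogeneous of degree 0 in `(x, y)`; for `x = z1 - z3`, `y = z2 - z3` its numerator becomes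
`4 (x² - x y + y²)³ = 4 (-3 g₂)³` and its denominator `27 ((x - y) x y)² = 27 Δ`.
-/

variable {K : Type*}

def jInvariant [Field K] (l : K) : K :=
  4 * (l ^ 2 - l + 1) ^ 3 / (27 * l ^ 2 * (l - 1) ^ 2)

theorem jInvariant_div [Field K] (x : K) {y : K} (hy : y ≠ 0) :
    jInvariant (x / y) = 4 * (x ^ 2 - x * y + y ^ 2) ^ 3 / (27 * ((x - y) * x * y) ^ 2) := by
  rw [jInvariant, ← mul_div_mul_right _ _ (pow_ne_zero 6 hy)]
  congr 1 <;> field_simp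

theorem depressed_cubic_vieta [Field K] [NeZero (2 : K)] {p q a b c : K}
    (h : ∀ z, z ^ 3 + p * z + q = (z - a) * (z - b) * (z - c)) :
    a + b + c = 0 ∧ p = a * b + a * c + b * c ∧ q = -(a * b * c) := by
  have hsum : (2 : K) * (a + b + c) = 0 := by linear_combination h 1 + h (-1) - 2 * h 0
  have hp : (2 : K) * p = 2 * (a * b + a * c + b * c) := by linear_combination h 1 - h (-1)
  exact ⟨(mul_eq_zero.mp hsum).resolve_left two_ne_zero, mul_left_cancel₀ two_ne_zero hp,
    by linear_combination h 0⟩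

section AddAddEqZero

variable [CommRing K] {a b c : K}

theorem sq_sub_mul_add_sq_of_add_add_eq_zero (h : a + b + c = 0) :
    (a - c) ^ 2 - (a - c) * (b - c) + (b - c) ^ 2 = -3 * (a * b + a * c + b * c) := by
  linear_combination (a + b + c) * h

theorem cubic_discr_eq_sq_of_add_add_eq_zero (h : a + b + c = 0) :
    -4 * (a * b + a * c + b * c) ^ 3 - 27 * (-(a * b * c)) ^ 2 =
      ((a - b) * (a - c) * (b - c)) ^ 2 := by
  obtain rfl : c = -a - b := by linear_combination h
  ring

end AddAddEqZero

theorem jInvariant_roots_eq_general (z1 z2 z3 g2 g3 : ℂ)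
    (h23 : z2 ≠ z3)
    (hroots : ∀ z : ℂ, z ^ 3 + g2 * z + g3 = (z - z1) * (z - z2) * (z - z3)) :
    (4 * (((z1 - z3) / (z2 - z3)) ^ 2 - (z1 - z3) / (z2 - z3) + 1) ^ 3) /
      (27 * ((z1 - z3) / (z2 - z3)) ^ 2 * ((z1 - z3) / (z2 - z3) - 1) ^ 2) =
      -4 * g2 ^ 3 / (-4 * g2 ^ 3 - 27 * g3 ^ 2) := by
  obtain ⟨hsum, rfl, rfl⟩ := depressed_cubic_vieta hroots
  change jInvariant ((z1 - z3) / (z2 - z3)) = _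
  rw [jInvariant_div _ (sub_ne_zero.mpr h23), sub_sub_sub_cancel_right,
    sq_sub_mul_add_sq_of_add_add_eq_zero hsum, cubic_discr_eq_sq_of_add_add_eq_zero hsum]
  -- as an atom, `Δ` lets `ring` split `(27 * Δ)⁻¹` into `27⁻¹ * Δ⁻¹`
  generalize ((z1 - z2) * (z1 - z3) * (z2 - z3)) ^ 2 = Δ
  ring

/-- If the roots `z1, z2, z3` of `z³ + g₂ z + g₃` are distinct, then
`j(z1,z2,z3,∞) = -4 g₂³ / Δ` where `Δ = -4g₂³ - 27g₃²`. -/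
theorem jInvariant_roots_eq (z1 z2 z3 g2 g3 : ℂ)
    (h12 : z1 ≠ z2) (h13 : z1 ≠ z3) (h23 : z2 ≠ z3)
    (hroots : ∀ z : ℂ, z ^ 3 + g2 * z + g3 = (z - z1) * (z - z2) * (z - z3)) :
    (4 * (((z1 - z3) / (z2 - z3)) ^ 2 - (z1 - z3) / (z2 - z3) + 1) ^ 3) /
      (27 * ((z1 - z3) / (z2 - z3)) ^ 2 * ((z1 - z3) / (z2 - z3) - 1) ^ 2) =
      -4 * g2 ^ 3 / (-4 * g2 ^ 3 - 27 * g3 ^ 2) :=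
  jInvariant_roots_eq_general z1 z2 z3 g2 g3 h23 hroots
end

section
/- Define operations on sequences (a_i)_{i=1}^{m} in {1,2}: η_∘ appends (1,2,1) if a_m = 1 and (2,1,2) if a_m = 2; η_× appends (2,1,2) if a_m = 1 and (1,2,1) if a_m = 2. Then for any sequence ω obtained from (1,2,1) by n-1 applications of operations η_∘ or η_×, each interleaved with arbitrary cyclic shifts, every maximal constant run of ω has length at most n. -/
/-- `η_∘`: append the triple matching the last entry. -/
def etaO (a : List ℤ) : List ℤ :=
  a ++ (if a.getLast? = some 1 then [1, 2, 1] else [2, 1, 2])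

/-- `η_×`: append the triple not matching the last entry. -/
def etaX (a : List ℤ) : List ℤ :=
  a ++ (if a.getLast? = some 1 then [2, 1, 2] else [1, 2, 1])

/-- The cyclic shift `σ` at stage `i`: a plain rotation for `i` even, and with the
wrapped entry complemented (`a₁ ↦ 3 - a₁`) for `i` odd. -/
def cshift (i : ℕ) (a : List ℤ) : List ℤ :=
  if i % 2 = 0 then a.rotate 1 else a.tail ++ [3 - a.headI]

/-- Sequences obtained from `(1,2,1)` by `n-1` applications of `η_∘`/`η_×`, each
interleaved with arbitrary powers of the cyclic shift. -/
inductive Built : ℕ → List ℤ → Prop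
  | base : Built 1 [1, 2, 1]
  | stepO {i : ℕ} {a : List ℤ} (k : ℕ) : Built i a → Built (i + 1) (etaO ((cshift i)^[k] a))
  | stepX {i : ℕ} {a : List ℤ} (k : ℕ) : Built i a → Built (i + 1) (etaX ((cshift i)^[k] a))

/-!
Read a sequence `l` of length `L` as the infinite sequence `j ↦ head ((cshift p)^[j] l)`. It
repeats with period `L` up to the complement `x ↦ 3 - x`, which preserves whether two
neighbours differ, so its breaks (positions `j` with different entries at `j` and `j + 1`) are
`L`-periodic for either twist. The invariant at stage `i` is that every `i` consecutive positions
contain a break. Shifting preserves it. Appending `(c, 3 - c, c)` to a sequence of length `3i`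
creates breaks at `3i` and `3i + 1`; a window of `i + 1` positions then either lies in the old
part, where its breaks survive, reaches `3i` or `3i + 1`, or starts at `3i + 2` and wraps
around onto the first `i` positions, which contain an old break.
-/

namespace CShift

def twist (p : ℕ) (x : ℤ) : ℤ := if p % 2 = 0 then x else 3 - x

lemma twist_injective (p : ℕ) : Function.Injective (twist p) := by
  intro x y h
  unfold twist at h
  split at h <;> omega

lemma cshift_cons (p : ℕ) (x : ℤ) (xs : List ℤ) : cshift p (x :: xs) = xs ++ [twist p x] := by
  unfold cshift twist
  split <;> simp [List.rotate_cons_succ]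

lemma length_cshift (p : ℕ) {l : List ℤ} (hl : l ≠ []) : (cshift p l).length = l.length := by
  obtain ⟨x, xs, rfl⟩ := List.exists_cons_of_ne_nil hl
  simp [cshift_cons]

lemma cshift_ne_nil (p : ℕ) {l : List ℤ} (hl : l ≠ []) : cshift p l ≠ [] := by
  rw [← List.length_pos_iff, length_cshift p hl]
  exact List.length_pos_iff.mpr hl

lemma iterate_cshift_ne_nil (p k : ℕ) {l : List ℤ} (hl : l ≠ []) : (cshift p)^[k] l ≠ [] := by
  induction k with
  | zero => exact hl
  | succ k ih => rw [Function.iterate_succ_apply']; exact cshift_ne_nil p ih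

lemma length_iterate_cshift (p k : ℕ) {l : List ℤ} (hl : l ≠ []) :
    ((cshift p)^[k] l).length = l.length := by
  induction k with
  | zero => rfl
  | succ k ih =>
    rw [Function.iterate_succ_apply', length_cshift p (iterate_cshift_ne_nil p k hl), ih]

lemma iterate_cshift_of_le_length (p : ℕ) {l : List ℤ} {k : ℕ} (hk : k ≤ l.length) :
    (cshift p)^[k] l = l.drop k ++ (l.take k).map (twist p) := by
  induction k with
  | zero => simp
  | succ k ih =>
    have hk' : k < l.length := hk
    rw [Function.iterate_succ_apply', ih hk'.le, List.drop_eq_getElem_cons hk', List.cons_append,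
      cshift_cons, List.take_add_one, List.getElem?_eq_getElem hk']
    simp only [List.append_assoc, Option.toList_some, List.map_append, List.map_cons, List.map_nil]

lemma cshift_map_twist (p : ℕ) {l : List ℤ} (hl : l ≠ []) :
    cshift p (l.map (twist p)) = (cshift p l).map (twist p) := by
  obtain ⟨x, xs, rfl⟩ := List.exists_cons_of_ne_nil hl
  simp [cshift_cons]

lemma iterate_cshift_map_twist (p k : ℕ) {l : List ℤ} (hl : l ≠ []) :
    (cshift p)^[k] (l.map (twist p)) = ((cshift p)^[k] l).map (twist p) := by
  induction k generalizing l with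
  | zero => rfl
  | succ k ih =>
    rw [Function.iterate_succ_apply, Function.iterate_succ_apply, cshift_map_twist p hl,
      ih (cshift_ne_nil p hl)]

/-- Entry `j` of the infinite sequence read off `l` cyclically, complementing every other
period when `p` is odd. -/
def cycSeq (p : ℕ) (l : List ℤ) (j : ℕ) : ℤ := ((cshift p)^[j] l).headI

lemma cycSeq_of_lt (p : ℕ) {l : List ℤ} {j : ℕ} (hj : j < l.length) : cycSeq p l j = l[j] := by
  rw [cycSeq, iterate_cshift_of_le_length p hj.le, List.drop_eq_getElem_cons hj]
  rfl

lemma cycSeq_iterate_cshift (p k j : ℕ) (l : List ℤ) :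
    cycSeq p ((cshift p)^[k] l) j = cycSeq p l (k + j) := by
  rw [cycSeq, cycSeq, ← Function.iterate_add_apply, Nat.add_comm]

lemma cycSeq_add_length (p j : ℕ) {l : List ℤ} (hl : l ≠ []) :
    cycSeq p l (j + l.length) = twist p (cycSeq p l j) := by
  have hfull : (cshift p)^[l.length] l = l.map (twist p) := by
    simp [iterate_cshift_of_le_length p le_rfl]
  obtain ⟨x, xs, hx⟩ := List.exists_cons_of_ne_nil (iterate_cshift_ne_nil p j hl)
  rw [cycSeq, cycSeq, Function.iterate_add_apply, hfull, iterate_cshift_map_twist p j hl, hx]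
  rfl

def IsBreak (p : ℕ) (l : List ℤ) (j : ℕ) : Prop := cycSeq p l j ≠ cycSeq p l (j + 1)

lemma isBreak_periodic (p : ℕ) {l : List ℤ} (hl : l ≠ []) :
    Function.Periodic (IsBreak p l) l.length := fun j => by
  rw [IsBreak, IsBreak, Nat.add_right_comm, cycSeq_add_length p j hl,
    cycSeq_add_length p (j + 1) hl, (twist_injective p).ne_iff]

lemma isBreak_append_of_lt (p p' : ℕ) {l : List ℤ} (t : List ℤ) {j : ℕ} (hj : j + 1 < l.length) :
    IsBreak p' (l ++ t) j ↔ IsBreak p l j := by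
  have hj' : j + 1 < (l ++ t).length := by simp; omega
  rw [IsBreak, IsBreak, cycSeq_of_lt p' hj', cycSeq_of_lt p' (by omega), cycSeq_of_lt p hj,
    cycSeq_of_lt p (by omega), List.getElem_append_left, List.getElem_append_left]

/-- Every run of `cycSeq p l` has length at most `i`. -/
def RunsAtMost (p i : ℕ) (l : List ℤ) : Prop := ∀ k, ∃ j < i, IsBreak p l (k + j)

lemma runsAtMost_of_forall_lt_length {p i : ℕ} {l : List ℤ} (hl : l ≠ [])
    (h : ∀ r < l.length, ∃ j < i, IsBreak p l (r + j)) : RunsAtMost p i l := by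
  intro k
  obtain ⟨j, hj, hbreak⟩ := h (k % l.length) (Nat.mod_lt _ (List.length_pos_iff.mpr hl))
  refine ⟨j, hj, ?_⟩
  rwa [← (isBreak_periodic p hl).map_mod_nat, Nat.mod_add_mod,
    (isBreak_periodic p hl).map_mod_nat] at hbreak

lemma RunsAtMost.iterate_cshift {p i : ℕ} {l : List ℤ} (h : RunsAtMost p i l) (k : ℕ) :
    RunsAtMost p i ((cshift p)^[k] l) := by
  intro m
  obtain ⟨j, hj, hbreak⟩ := h (k + m)
  refine ⟨j, hj, ?_⟩
  rwa [IsBreak, cycSeq_iterate_cshift, cycSeq_iterate_cshift, ← Nat.add_assoc, ← Nat.add_assoc,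
    ← Nat.add_assoc]

lemma RunsAtMost.append_triple {p i : ℕ} {l : List ℤ} (hlen : l.length = 3 * i)
    (h : RunsAtMost p i l) (p' : ℕ) (c : ℤ) : RunsAtMost p' (i + 1) (l ++ [c, 3 - c, c]) := by
  set ω := l ++ [c, 3 - c, c]
  have hωlen : ω.length = 3 * i + 3 := by simp [ω, hlen]
  have hne : ω ≠ [] := by simp [ω]
  have old : ∀ j, j + 1 < 3 * i → IsBreak p l j → IsBreak p' ω j := fun j hj =>
    (isBreak_append_of_lt p p' _ (hlen ▸ hj)).mpr
  have new₀ : IsBreak p' ω (3 * i) := by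
    rw [IsBreak, cycSeq_of_lt p' (by omega), cycSeq_of_lt p' (by omega)]
    simp [ω, List.getElem_append_right, hlen]
    omega
  have new₁ : IsBreak p' ω (3 * i + 1) := by
    rw [IsBreak, cycSeq_of_lt p' (by omega), cycSeq_of_lt p' (by omega)]
    simp [ω, List.getElem_append_right, hlen, Nat.add_assoc]
    omega
  refine runsAtMost_of_forall_lt_length hne fun r hr => ?_
  rcases (by omega : r + 1 ≤ 2 * i ∨ (2 * i ≤ r ∧ r ≤ 3 * i) ∨ r = 3 * i + 1 ∨ r = 3 * i + 2)
    with hr | hr | rfl | rfl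
  · obtain ⟨j, hj, hbreak⟩ := h r
    exact ⟨j, by omega, old _ (by omega) hbreak⟩
  · exact ⟨3 * i - r, by omega, by rwa [Nat.add_sub_cancel' hr.2]⟩
  · exact ⟨0, by omega, new₁⟩
  · -- the first break of `l`, one period later
    obtain ⟨j, hj, hbreak⟩ := h 0
    refine ⟨j + 1, by omega, ?_⟩
    rw [show 3 * i + 2 + (j + 1) = j + ω.length by omega, isBreak_periodic p' hne j]
    exact old j (by omega) (by rwa [Nat.zero_add] at hbreak)

lemma cycSeq_eq_of_take_eq_replicate {p m j : ℕ} {l : List ℤ} {v : ℤ}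
    (h : l.take m = List.replicate m v) (hj : j < m) : cycSeq p l j = v := by
  have hjl : j < l.length := by
    have := congrArg List.length h
    simp at this
    omega
  have := congrArg (·[j]?) h
  simp [hj, hjl] at this
  rw [cycSeq_of_lt p hjl, this]

end CShift

open CShift

lemma etaO_eq_append_triple (a : List ℤ) : ∃ c : ℤ, etaO a = a ++ [c, 3 - c, c] := by
  unfold etaO
  split
  · exact ⟨1, rfl⟩
  · exact ⟨2, rfl⟩

lemma etaX_eq_append_triple (a : List ℤ) : ∃ c : ℤ, etaX a = a ++ [c, 3 - c, c] := by
  unfold etaX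
  split
  · exact ⟨2, rfl⟩
  · exact ⟨1, rfl⟩

namespace Built

lemma ne_nil {i : ℕ} {a : List ℤ} (h : Built i a) : a ≠ [] := by
  cases h with
  | base => simp
  | @stepO i a k _ =>
    obtain ⟨c, hc⟩ := etaO_eq_append_triple ((cshift i)^[k] a)
    simp [hc]
  | @stepX i a k _ =>
    obtain ⟨c, hc⟩ := etaX_eq_append_triple ((cshift i)^[k] a)
    simp [hc]

lemma length_eq {i : ℕ} {a : List ℤ} (h : Built i a) : a.length = 3 * i := by
  induction h with
  | base => rfl
  | @stepO i a k h ih =>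
    obtain ⟨c, hc⟩ := etaO_eq_append_triple ((cshift i)^[k] a)
    simp [hc, length_iterate_cshift i k h.ne_nil, ih]
    ring
  | @stepX i a k h ih =>
    obtain ⟨c, hc⟩ := etaX_eq_append_triple ((cshift i)^[k] a)
    simp [hc, length_iterate_cshift i k h.ne_nil, ih]
    ring

lemma runsAtMost {i : ℕ} {a : List ℤ} (h : Built i a) : RunsAtMost i i a := by
  induction h with
  | base =>
    refine runsAtMost_of_forall_lt_length (by simp) fun r hr => ⟨0, one_pos, ?_⟩
    simp only [List.length_cons, List.length_nil] at hr
    interval_cases r <;> unfold IsBreak <;> decide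
  | @stepO i a k h ih =>
    obtain ⟨c, hc⟩ := etaO_eq_append_triple ((cshift i)^[k] a)
    rw [hc]
    exact (ih.iterate_cshift k).append_triple
      (by rw [length_iterate_cshift i k h.ne_nil, h.length_eq]) (i + 1) c
  | @stepX i a k h ih =>
    obtain ⟨c, hc⟩ := etaX_eq_append_triple ((cshift i)^[k] a)
    rw [hc]
    exact (ih.iterate_cshift k).append_triple
      (by rw [length_iterate_cshift i k h.ne_nil, h.length_eq]) (i + 1) c

end Built

/-- Every maximal constant run of a sequence built from `(1,2,1)` by `n-1` interleaved
shift-and-append operations has (cyclic) length at most `n`: there is no constant block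
of `n+1` consecutive entries in the (twisted) cyclic sequence. -/
theorem built_run_le (n : ℕ) (ω : List ℤ) (h : Built n ω) :
    ∀ (k : ℕ) (v : ℤ), ((cshift n)^[k] ω).take (n + 1) ≠ List.replicate (n + 1) v := by
  intro k v hrun
  obtain ⟨j, hj, hbreak⟩ := h.runsAtMost.iterate_cshift k 0
  rw [Nat.zero_add] at hbreak
  exact hbreak ((cycSeq_eq_of_take_eq_replicate hrun (by omega)).trans
    (cycSeq_eq_of_take_eq_replicate hrun (by omega)).symm)
end

section
/- If f_{3n} = y³ + b x^{2n} y + c x^{3n} with b, c ∈ ℂ and f_{3n} squarefree (as a polynomial), then the partial derivatives f_{3n,x} = 2nb x^{2n-1}y + 3nc x^{3n-1} and f_{3n,y} = 3y² + b x^{2n} are coprime in ℂ[x,y]. -/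
open MvPolynomial

/-!
If `4b³ + 27c² = 0`, the cubic `y³ + b x²ⁿ y + c x³ⁿ` is divisible by the square of
`y - r xⁿ` with `b = -3r²`, `c = 2r³`, so squarefreeness forces a nonzero discriminant. Then
`4nb² x²ⁿ⁻¹ f_y - 3(2b y - 3c xⁿ) f_x = n(4b³ + 27c²) x⁴ⁿ⁻¹`, so a common divisor of the partials
divides a power of the prime `x`, which does not divide `f_y = 3y² + b x²ⁿ`.
-/

theorem cube_add_eq_sq_mul {R : Type*} [CommRing R] (n : ℕ) (r : R) :
    (X 1 ^ 3 + C (-3 * r ^ 2) * X 0 ^ (2 * n) * X 1 + C (2 * r ^ 3) * X 0 ^ (3 * n) :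
      MvPolynomial (Fin 2) R) = (X 1 - C r * X 0 ^ n) ^ 2 * (X 1 + C (2 * r) * X 0 ^ n) := by
  simp only [pow_mul', map_mul, map_neg, map_pow, map_ofNat]
  ring

theorem pderivs_combination_eq_X_pow {R : Type*} [CommRing R] {n : ℕ} (hn : 0 < n) (b c : R) :
    (C (4 * n * b ^ 2) * X 0 ^ (2 * n - 1) * (C 3 * X 1 ^ 2 + C b * X 0 ^ (2 * n)) -
      C 3 * (C (2 * b) * X 1 - C (3 * c) * X 0 ^ n) *
        (C (2 * n * b) * X 0 ^ (2 * n - 1) * X 1 + C (3 * n * c) * X 0 ^ (3 * n - 1)) :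
      MvPolynomial (Fin 2) R) = C (n * (4 * b ^ 3 + 27 * c ^ 2)) * X 0 ^ (4 * n - 1) := by
  obtain ⟨k, rfl⟩ := Nat.exists_eq_add_of_lt hn
  simp only [show 2 * (0 + k + 1) - 1 = 2 * k + 1 by omega,
    show 3 * (0 + k + 1) - 1 = 3 * k + 2 by omega, show 4 * (0 + k + 1) - 1 = 4 * k + 3 by omega,
    map_mul, map_add, map_pow, map_ofNat, map_natCast]
  ring

section Field

variable {K : Type*} [Field K]

theorem not_X_dvd_C_mul_X_pow_add {σ : Type*} {i j : σ} (hij : i ≠ j) {a : K} (ha : a ≠ 0)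
    (m : ℕ) (b : K) {k : ℕ} (hk : k ≠ 0) :
    ¬ (X i : MvPolynomial σ K) ∣ C a * X j ^ m + C b * X i ^ k := by
  intro h
  have hX : (X i : MvPolynomial σ K) ∣ C a * X j ^ m :=
    (dvd_add_left ((dvd_pow_self _ hk).mul_left _)).1 h
  rcases X_prime.dvd_or_dvd hX with hC | hXj
  · exact X_prime.not_isUnit (isUnit_of_dvd_unit hC (ha.isUnit.map C))
  · exact hij (X_dvd_X.1 (X_prime.dvd_of_dvd_pow hXj))

variable [CharZero K]

theorem exists_double_root_of_discr_eq_zero {b c : K} (h : 4 * b ^ 3 + 27 * c ^ 2 = 0) :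
    ∃ r : K, b = -3 * r ^ 2 ∧ c = 2 * r ^ 3 := by
  by_cases hb : b = 0
  · subst hb
    have hc : c = 0 := pow_eq_zero_iff two_ne_zero |>.1 (by linear_combination h / 27)
    exact ⟨0, by simp [hc]⟩
  · refine ⟨-3 * c / (2 * b), ?_, ?_⟩
    · field_simp
      linear_combination h
    · field_simp
      linear_combination c * h

theorem discr_ne_zero_of_squarefree {n : ℕ} {b c : K}
    (hsf : Squarefree (X 1 ^ 3 + C b * X 0 ^ (2 * n) * X 1 + C c * X 0 ^ (3 * n) :
      MvPolynomial (Fin 2) K)) :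
    4 * b ^ 3 + 27 * c ^ 2 ≠ 0 := by
  intro h
  obtain ⟨r, rfl, rfl⟩ := exists_double_root_of_discr_eq_zero h
  rw [cube_add_eq_sq_mul, sq] at hsf
  have hunit : IsUnit (X 1 - C r * X 0 ^ n : MvPolynomial (Fin 2) K) := hsf _ (dvd_mul_right _ _)
  have := hunit.map (eval ![1, r])
  simp only [map_sub, map_mul, map_pow, eval_X, eval_C, Matrix.cons_val_one, Matrix.cons_val_zero,
    one_pow, mul_one, sub_self] at this
  exact not_isUnit_zero this

end Field

/-- If `f₃ₙ = y³ + b x²ⁿ y + c x³ⁿ` is squarefree, then its partial derivatives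
`f₃ₙ,ₓ = 2nb x²ⁿ⁻¹y + 3nc x³ⁿ⁻¹` and `f₃ₙ,ᵧ = 3y² + b x²ⁿ` have no common nonunit
factor in `ℂ[x,y]`. -/
theorem pderivs_coprime (n : ℕ) (hn : 0 < n) (b c : ℂ)
    (f : MvPolynomial (Fin 2) ℂ)
    (hf : f = X 1 ^ 3 + C b * X 0 ^ (2 * n) * X 1 + C c * X 0 ^ (3 * n))
    (hsf : Squarefree f) :
    ∀ d : MvPolynomial (Fin 2) ℂ,
      d ∣ (C (2 * n * b : ℂ) * X 0 ^ (2 * n - 1) * X 1 + C (3 * n * c : ℂ) * X 0 ^ (3 * n - 1)) →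
      d ∣ (C 3 * X 1 ^ 2 + C b * X 0 ^ (2 * n)) →
      IsUnit d := by
  subst hf
  have hdisc := discr_ne_zero_of_squarefree hsf
  have hrel : IsRelPrime (X 0 ^ (4 * n - 1) : MvPolynomial (Fin 2) ℂ)
      (C 3 * X 1 ^ 2 + C b * X 0 ^ (2 * n)) :=
    (X_prime.irreducible.isRelPrime_iff_not_dvd.2 <|
      not_X_dvd_C_mul_X_pow_add zero_ne_one three_ne_zero 2 b (by omega)).pow_left
  intro d hdx hdy
  have hd : d ∣ C (n * (4 * b ^ 3 + 27 * c ^ 2)) * X 0 ^ (4 * n - 1) :=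
    pderivs_combination_eq_X_pow hn b c ▸ dvd_sub (hdy.mul_left _) (hdx.mul_left _)
  have hcoeff : IsUnit (C (n * (4 * b ^ 3 + 27 * c ^ 2)) : MvPolynomial (Fin 2) ℂ) :=
    (mul_ne_zero (Nat.cast_ne_zero.2 hn.ne') hdisc).isUnit.map C
  exact hrel (hcoeff.dvd_mul_left.1 hd) hdy
end

section
/- Let f_{3n} = y³ + b x^{2n} y + c x^{3n} with bc ≠ 0, and suppose g_k = a x^{k-n} y + β x^k (k ≥ n) is not a multiple of g = 2by + 3cx^n. Then for every m with 3n ≤ m ≤ 4n-2, the vector space P(m) of (1,n)-quasihomogeneous polynomials of degree m is spanned by P(m-2n)·f_{3n,y} + P(m-3n+1)·f_{3n,x} + P(m-k)·g_k, where P(j) denotes the span of monomials x^iy^l with i + nl = j. -/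
/-!
For `3n ≤ m < 4n` the space `P(m)` is spanned by `xᵐ, xᵐ⁻ⁿy, xᵐ⁻²ⁿy², xᵐ⁻³ⁿy³`.
Both `x^{m-k} g_k` and `x^{m-3n+1} f_{3n,x}` are combinations of `xᵐ⁻ⁿy` and `xᵐ` alone, with
determinant `n (3ac - 2bβ)`, and this is nonzero precisely because `g_k` is not a multiple of
`g`; so both monomials are reached. Multiplying `f_{3n,y} = 3y² + bx²ⁿ` by `xᵐ⁻²ⁿ` and by
`xᵐ⁻³ⁿy` then produces the other two.
-/

open MvPolynomial

/-- `P(j)`: the span of the monomials `xⁱyˡ` with `i + n·l = j`. -/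
noncomputable def quasiSpan (n j : ℕ) : Submodule ℂ (MvPolynomial (Fin 2) ℂ) :=
  Submodule.span ℂ {f | ∃ i l : ℕ, i + n * l = j ∧ f = X 0 ^ i * X 1 ^ l}

theorem Submodule.mem_and_mem_of_smul_add_smul_mem {K V : Type*} [Field K] [AddCommGroup V]
    [Module K V] {M : Submodule K V} {v w : V} {a b c d : K} (hdet : a * d - b * c ≠ 0)
    (h₁ : a • v + b • w ∈ M) (h₂ : c • v + d • w ∈ M) : v ∈ M ∧ w ∈ M := by
  have hv : v = (a * d - b * c)⁻¹ • (d • (a • v + b • w) - b • (c • v + d • w)) := by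
    match_scalars
    field_simp
    ring
  have hw : w = (a * d - b * c)⁻¹ • (a • (c • v + d • w) - c • (a • v + b • w)) := by
    match_scalars
    field_simp
    ring
  constructor
  · rw [hv]
    exact M.smul_mem _ (M.sub_mem (M.smul_mem _ h₁) (M.smul_mem _ h₂))
  · rw [hw]
    exact M.smul_mem _ (M.sub_mem (M.smul_mem _ h₂) (M.smul_mem _ h₁))

theorem Submodule.exists_of_mem_sup_mul_span_singleton {R A : Type*} [CommSemiring R]
    [Semiring A] [Algebra R A] {P Q S : Submodule R A} {u v w h : A}
    (hh : h ∈ P * span R {u} ⊔ Q * span R {v} ⊔ S * span R {w}) :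
    ∃ p ∈ P, ∃ q ∈ Q, ∃ r ∈ S, h = p * u + q * v + r * w := by
  obtain ⟨_, hpq, _, hrw, rfl⟩ := mem_sup.mp hh
  obtain ⟨_, hpu, _, hqv, rfl⟩ := mem_sup.mp hpq
  obtain ⟨p, hp, rfl⟩ := mem_mul_span_singleton.mp hpu
  obtain ⟨q, hq, rfl⟩ := mem_mul_span_singleton.mp hqv
  obtain ⟨r, hr, rfl⟩ := mem_mul_span_singleton.mp hrw
  exact ⟨p, hp, q, hq, r, hr, rfl⟩

theorem X_pow_mul_linear {u e₁ e₂ d₁ d₂ : ℕ} (h₁ : u + e₁ = d₁) (h₂ : u + e₂ = d₂) (a β : ℂ) :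
    (X 0 ^ u * (C a * X 0 ^ e₁ * X 1 + C β * X 0 ^ e₂) : MvPolynomial (Fin 2) ℂ) =
      a • (X 0 ^ d₁ * X 1) + β • X 0 ^ d₂ := by
  subst h₁ h₂
  simp only [smul_eq_C_mul, pow_add]
  ring

theorem C_mul_X_add_C_mul_X_pow_dvd_of_mul_eq_mul {b c a β : ℂ} (hb : b ≠ 0)
    (h : a * (3 * c) = β * (2 * b)) (e n : ℕ) :
    (C (2 * b) * X 1 + C (3 * c) * X 0 ^ n : MvPolynomial (Fin 2) ℂ) ∣
      C a * X 0 ^ e * X 1 + C β * X 0 ^ (e + n) := by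
  refine ⟨C (a / (2 * b)) * X 0 ^ e, ?_⟩
  have ha : (C a : MvPolynomial (Fin 2) ℂ) = C (2 * b) * C (a / (2 * b)) := by
    rw [← C_mul]; congr 1; field_simp
  have hβ : (C β : MvPolynomial (Fin 2) ℂ) = C (3 * c) * C (a / (2 * b)) := by
    rw [← C_mul]; congr 1; field_simp; linear_combination -h
  rw [ha, hβ, pow_add]
  ring

theorem mul_sub_mul_ne_zero_of_not_dvd {n k : ℕ} {a b c β : ℂ} (hn : n ≠ 0) (hk : n ≤ k)
    (hb : b ≠ 0)
    (hnd : ¬ (C (2 * b) * X 1 + C (3 * c) * X 0 ^ n : MvPolynomial (Fin 2) ℂ) ∣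
      C a * X 0 ^ (k - n) * X 1 + C β * X 0 ^ k) :
    a * (3 * n * c) - β * (2 * n * b) ≠ 0 := by
  have hne : a * (3 * c) ≠ β * (2 * b) := fun heq => hnd <| by
    obtain ⟨e, rfl⟩ := Nat.exists_eq_add_of_le' hk
    simpa only [Nat.add_sub_cancel] using C_mul_X_add_C_mul_X_pow_dvd_of_mul_eq_mul hb heq e n
  rw [show a * (3 * n * c) - β * (2 * n * b) = n * (a * (3 * c) - β * (2 * b)) by ring]
  exact mul_ne_zero (Nat.cast_ne_zero.mpr hn) (sub_ne_zero.mpr hne)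

theorem X_pow_mul_X_pow_add_two_mem {M : Submodule ℂ (MvPolynomial (Fin 2) ℂ)} {n i l : ℕ}
    {b : ℂ} (h₁ : X 0 ^ i * X 1 ^ l * (C 3 * X 1 ^ 2 + C b * X 0 ^ (2 * n)) ∈ M)
    (h₂ : X 0 ^ (i + 2 * n) * X 1 ^ l ∈ M) : X 0 ^ i * X 1 ^ (l + 2) ∈ M := by
  rw [← Submodule.smul_mem_iff M (three_ne_zero : (3 : ℂ) ≠ 0)]
  convert M.sub_mem h₁ (M.smul_mem b h₂) using 1
  simp only [smul_eq_C_mul]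
  ring

namespace quasiSpan

theorem monomial_mem (n i l : ℕ) :
    (X 0 ^ i * X 1 ^ l : MvPolynomial (Fin 2) ℂ) ∈ quasiSpan n (i + n * l) :=
  Submodule.subset_span ⟨i, l, rfl, rfl⟩

theorem X_pow_mem (n i : ℕ) : (X 0 ^ i : MvPolynomial (Fin 2) ℂ) ∈ quasiSpan n i := by
  simpa using monomial_mem n i 0

theorem le_three_of_add_mul_lt {n i l m : ℕ} (h : i + n * l = m) (hm : m < 4 * n) : l ≤ 3 := by
  by_contra! hl
  have : n * 4 ≤ n * l := Nat.mul_le_mul_left n hl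
  omega

theorem le_of_monomial_mem {M : Submodule ℂ (MvPolynomial (Fin 2) ℂ)} {n m : ℕ} {b : ℂ}
    (hm : m < 4 * n) (h₀ : X 0 ^ m ∈ M) (h₁ : X 0 ^ (m - n) * X 1 ∈ M)
    (hfy : ∀ i l, i + n * l = m - 2 * n →
      X 0 ^ i * X 1 ^ l * (C 3 * X 1 ^ 2 + C b * X 0 ^ (2 * n)) ∈ M) :
    quasiSpan n m ≤ M := by
  refine Submodule.span_le.mpr ?_
  rintro _ ⟨i, l, hil, rfl⟩
  have hl := le_three_of_add_mul_lt hil hm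
  interval_cases l
  · simpa [show i = m by omega] using h₀
  · simpa [show i = m - n by omega] using h₁
  · simpa using X_pow_mul_X_pow_add_two_mem (hfy i 0 (by omega))
      (by simpa [show i + 2 * n = m by omega] using h₀)
  · simpa using X_pow_mul_X_pow_add_two_mem (hfy i 1 (by omega))
      (by simpa [show i + 2 * n = m - n by omega] using h₁)

end quasiSpan

theorem quasiSpan_spanned_general (n k : ℕ) (hk₁ : n ≤ k) (hk₂ : k < 3 * n - 1)
    (a b c β : ℂ) (hbc : b * c ≠ 0)
    (fy fx gk g : MvPolynomial (Fin 2) ℂ)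
    (hfy : fy = C 3 * X 1 ^ 2 + C b * X 0 ^ (2 * n))
    (hfx : fx = C (2 * n * b : ℂ) * X 0 ^ (2 * n - 1) * X 1 +
        C (3 * n * c : ℂ) * X 0 ^ (3 * n - 1))
    (hg : g = C (2 * b) * X 1 + C (3 * c) * X 0 ^ n)
    (hgk : gk = C a * X 0 ^ (k - n) * X 1 + C β * X 0 ^ k)
    (hnd : ¬ g ∣ gk) :
    ∀ m : ℕ, 3 * n ≤ m → m ≤ 4 * n - 2 →
      ∀ h ∈ quasiSpan n m,
        ∃ p ∈ quasiSpan n (m - 2 * n), ∃ q ∈ quasiSpan n (m - (3 * n - 1)),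
          ∃ r ∈ quasiSpan n (m - k), h = p * fy + q * fx + r * gk := by
  intro m hm₁ hm₂ h hh
  have hdet : a * (3 * n * c) - β * (2 * n * b) ≠ 0 :=
    mul_sub_mul_ne_zero_of_not_dvd (by omega) hk₁ (left_ne_zero_of_mul hbc) (hg ▸ hgk ▸ hnd)
  set M := quasiSpan n (m - 2 * n) * Submodule.span ℂ {fy} ⊔
    quasiSpan n (m - (3 * n - 1)) * Submodule.span ℂ {fx} ⊔
    quasiSpan n (m - k) * Submodule.span ℂ {gk}
  refine Submodule.exists_of_mem_sup_mul_span_singleton ((?_ : quasiSpan n m ≤ M) hh)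
  have hgk_mem : a • (X 0 ^ (m - n) * X 1) + β • X 0 ^ m ∈ M := by
    rw [← X_pow_mul_linear (u := m - k) (e₁ := k - n) (e₂ := k) (by omega) (by omega), ← hgk]
    exact Submodule.mem_sup_right <|
      Submodule.mul_mem_mul (quasiSpan.X_pow_mem n _) (Submodule.mem_span_singleton_self _)
  have hfx_mem : (2 * n * b : ℂ) • (X 0 ^ (m - n) * X 1) + (3 * n * c : ℂ) • X 0 ^ m ∈ M := by
    rw [← X_pow_mul_linear (u := m - (3 * n - 1)) (e₁ := 2 * n - 1) (e₂ := 3 * n - 1)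
      (by omega) (by omega), ← hfx]
    exact Submodule.mem_sup_left <| Submodule.mem_sup_right <|
      Submodule.mul_mem_mul (quasiSpan.X_pow_mem n _) (Submodule.mem_span_singleton_self _)
  obtain ⟨hA, hB⟩ := Submodule.mem_and_mem_of_smul_add_smul_mem hdet hgk_mem hfx_mem
  refine quasiSpan.le_of_monomial_mem (b := b) (by omega) hB hA fun i l hil => ?_
  rw [← hfy]
  exact Submodule.mem_sup_left <| Submodule.mem_sup_left <|
    Submodule.mul_mem_mul (hil ▸ quasiSpan.monomial_mem n i l)
      (Submodule.mem_span_singleton_self _)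

/-- Let `f₃ₙ = y³ + b x²ⁿy + c x³ⁿ` with `bc ≠ 0` and let
`g_k = a x^{k-n}y + β x^k` (with `n ≤ k < 3n - 1`) not be a multiple of
`g = 2by + 3cxⁿ`. Then for every `3n ≤ m ≤ 4n - 2`, the space `P(m)` is spanned by
`P(m-2n)·f₃ₙ,ᵧ + P(m-3n+1)·f₃ₙ,ₓ + P(m-k)·g_k`. -/
theorem quasiSpan_spanned (n k : ℕ) (hn : 0 < n) (hk₁ : n ≤ k) (hk₂ : k < 3 * n - 1)
    (a b c β : ℂ) (hbc : b * c ≠ 0)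
    (fy fx gk g : MvPolynomial (Fin 2) ℂ)
    (hfy : fy = C 3 * X 1 ^ 2 + C b * X 0 ^ (2 * n))
    (hfx : fx = C (2 * n * b : ℂ) * X 0 ^ (2 * n - 1) * X 1 +
        C (3 * n * c : ℂ) * X 0 ^ (3 * n - 1))
    (hg : g = C (2 * b) * X 1 + C (3 * c) * X 0 ^ n)
    (hgk : gk = C a * X 0 ^ (k - n) * X 1 + C β * X 0 ^ k)
    (hnd : ¬ g ∣ gk) :
    ∀ m : ℕ, 3 * n ≤ m → m ≤ 4 * n - 2 →
      ∀ h ∈ quasiSpan n m,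
        ∃ p ∈ quasiSpan n (m - 2 * n), ∃ q ∈ quasiSpan n (m - (3 * n - 1)),
          ∃ r ∈ quasiSpan n (m - k), h = p * fy + q * fx + r * gk :=
  quasiSpan_spanned_general n k hk₁ hk₂ a b c β hbc fy fx gk g hfy hfx hg hgk hnd
end
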